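/- arXiv:math/0503552 — 3 statements merged into one kernel-verified Lean document; each statement's English description precedes it below -/
import Mathlib

section
/- If the quadratic form H(z) = E_Q(X·z)^2 − Σ_s v_s z_s^2 is identically zero, then for every k ∈ V, p_k(n) > 0 only when n = 0 or n is a standard basis vector e_s; moreover in that case all components of the right Frobenius eigenvector u are equal and Σ_s p_r(e_s) = 1 for r maximizing u_r. -/
open Matrix

lemma stmt_10_aux_single {V : Type*} [Fintype V] [DecidableEq V] (n : V → ℕ)
    (h : ∑ r, n r = 1) : ∃ s, n = Pi.single s 1 := by
  have h1 : ∃ s, n s ≠ 0 := by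
    by_contra hc
    push_neg at hc
    simp [hc] at h
  obtain ⟨s, hs⟩ := h1
  have hle : n s ≤ 1 := h ▸ Finset.single_le_sum (fun r _ => Nat.zero_le _) (Finset.mem_univ s)
  have hns : n s = 1 := le_antisymm hle (Nat.one_le_iff_ne_zero.2 hs)
  have hrest : ∑ r ∈ Finset.univ.erase s, n r = 0 := by
    have := Finset.add_sum_erase Finset.univ n (Finset.mem_univ s)
    omega
  refine ⟨s, funext fun t => ?_⟩
  rcases eq_or_ne t s with rfl | ht
  · simp [hns]
  · have : n t = 0 := (Finset.sum_eq_zero_iff.1 hrest) t (by simp [ht])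
    simp [this, Pi.single_eq_of_ne ht]


/-- If the quadratic form `H(z) = E_Q(X·z)² − ∑_s v_s z_s²` is identically zero, then for
every `k`, `p_k(n) > 0` only when `n = 0` or `n = e_s` for some `s`; moreover all components
of the right Frobenius eigenvector `u` are equal, and `∑_s p_r(e_s) = 1` for any `r`
maximizing `u_r`. -/
theorem stmt_10 {V : Type*} [Fintype V] [DecidableEq V]
    (p : V → (V → ℕ) → ℝ)
    (hp0 : ∀ s n, 0 ≤ p s n)
    (hp1 : ∀ s, ∑' n : V → ℕ, p s n = 1)
    (hp2 : ∀ s, Summable (fun n : V → ℕ => p s n * (∑ r, (n r : ℝ)) ^ 2))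
    (M : Matrix V V ℝ)
    (hM : ∀ k l, HasSum (fun n : V → ℕ => p k n * (n l : ℝ)) (M k l))
    (hirr : ∃ m : ℕ, ∀ i j, 0 < (M ^ m) i j)
    (v u : V → ℝ)
    (hv : Matrix.vecMul v M = v) (hu : M.mulVec u = u)
    (hvpos : ∀ s, 0 < v s) (hupos : ∀ s, 0 < u s)
    (hv1 : ∑ s, v s = 1) (hvu : v ⬝ᵥ u = 1)
    (hH0 : ∀ z : V → ℝ,
      (∑' n : V → ℕ, (∑ s, v s * p s n) * (∑ r, (n r : ℝ) * z r) ^ 2)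
        - ∑ s, v s * z s ^ 2 = 0) :
    (∀ k : V, ∀ n : V → ℕ, 0 < p k n → n = 0 ∨ ∃ s : V, n = Pi.single s 1)
    ∧ (∀ s r : V, u s = u r)
    ∧ (∀ r : V, (∀ s, u s ≤ u r) → ∑ s, p r (Pi.single s 1) = 1) := by
  classical
  set Nf : (V → ℕ) → ℝ := fun n => ∑ r, (n r : ℝ) with hNf
  set Q : (V → ℕ) → ℝ := fun n => ∑ s, v s * p s n with hQdef
  have hQnn : ∀ n, 0 ≤ Q n := fun n =>
    Finset.sum_nonneg fun s _ => mul_nonneg (hvpos s).le (hp0 s n)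
  -- each p s sums to 1
  have hsump : ∀ s, HasSum (p s) 1 := by
    intro s
    have hs : Summable (p s) := by
      by_contra hc
      have : (1 : ℝ) = 0 := by rw [← hp1 s, tsum_eq_zero_of_not_summable hc]
      exact one_ne_zero this
    simpa [hp1 s] using hs.hasSum
  -- Q sums to 1
  have hQsum : HasSum Q 1 := by
    have h1 : HasSum (fun n => ∑ s, v s * p s n) (∑ s, v s * 1) :=
      hasSum_sum fun s _ => (hsump s).mul_left (v s)
    simpa [hv1] using h1
  -- E[N] = 1
  have hrow : ∀ s, HasSum (fun n => p s n * Nf n) (∑ l, M s l) := by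
    intro s
    have h1 : HasSum (fun n : V → ℕ => ∑ l, p s n * (n l : ℝ)) (∑ l, M s l) :=
      hasSum_sum fun l _ => hM s l
    refine h1.congr_fun fun n => ?_
    simp [hNf, Finset.mul_sum]
  have hvM : ∀ l, ∑ s, v s * M s l = v l := by
    intro l
    have := congrFun hv l
    simpa [Matrix.vecMul, dotProduct] using this
  have hEN : HasSum (fun n => Q n * Nf n) 1 := by
    have h1 : HasSum (fun n => ∑ s, v s * (p s n * Nf n)) (∑ s, v s * ∑ l, M s l) :=
      hasSum_sum fun s _ => (hrow s).mul_left (v s)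
    have h2 : (∑ s, v s * ∑ l, M s l) = 1 := by
      calc ∑ s, v s * ∑ l, M s l = ∑ s, ∑ l, v s * M s l := by
            simp [Finset.mul_sum]
        _ = ∑ l, ∑ s, v s * M s l := Finset.sum_comm
        _ = ∑ l, v l := by simp [hvM]
        _ = 1 := hv1
    rw [h2] at h1
    refine h1.congr_fun fun n => ?_
    simp [hQdef, Finset.sum_mul, mul_assoc]
  -- E[N^2] = 1
  have hEN2sum : Summable (fun n => Q n * Nf n ^ 2) := by
    have h1 : Summable (fun n => ∑ s, v s * (p s n * Nf n ^ 2)) :=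
      summable_sum fun s _ => ((hp2 s).mul_left (v s))
    refine h1.congr fun n => ?_
    simp [hQdef, Finset.sum_mul, mul_assoc]
  have hEN2 : ∑' n, Q n * Nf n ^ 2 = 1 := by
    have h := hH0 (fun _ => 1)
    have h2 : (∑' n : V → ℕ, (∑ s, v s * p s n) * (∑ r, (n r : ℝ) * 1) ^ 2)
        = ∑' n, Q n * Nf n ^ 2 := by
      exact tsum_congr fun n => by simp [hQdef, hNf]
    rw [h2] at h
    have h3 : (∑ s, v s * (1:ℝ) ^ 2) = 1 := by simpa using hv1
    rw [h3] at h
    linarith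
  -- pointwise Q n * (Nf n ^ 2 - Nf n) = 0
  have hNfcast : ∀ n : V → ℕ, Nf n = ((∑ r, n r : ℕ) : ℝ) := fun n => by
    simp [hNf]
  have hkey1 : ∀ n, Q n * (Nf n ^ 2 - Nf n) = 0 := by
    have hsum : Summable (fun n => Q n * (Nf n ^ 2 - Nf n)) := by
      refine (hEN2sum.sub hEN.summable).congr fun n => by ring
    have htsum : ∑' n, Q n * (Nf n ^ 2 - Nf n) = 0 := by
      have : ∑' n, Q n * (Nf n ^ 2 - Nf n)
          = (∑' n, Q n * Nf n ^ 2) - ∑' n, Q n * Nf n := by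
        rw [← Summable.tsum_sub hEN2sum hEN.summable]
        exact tsum_congr fun n => by ring
      rw [this, hEN2, hEN.tsum_eq]
      ring
    have hnn : ∀ n, 0 ≤ Q n * (Nf n ^ 2 - Nf n) := by
      intro n
      refine mul_nonneg (hQnn n) ?_
      have hk : (∑ r, n r) ≤ (∑ r, n r) ^ 2 := Nat.le_self_pow (by norm_num) _
      have hk' : ((∑ r, n r : ℕ) : ℝ) ≤ (((∑ r, n r) ^ 2 : ℕ) : ℝ) := Nat.cast_le.mpr hk
      push_cast at hk'
      simp only [hNf]
      linarith
    intro n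
    have hle := Summable.le_tsum hsum n (fun m _ => hnn m)
    rw [htsum] at hle
    linarith [hnn n]
  -- when Q n ≠ 0, sum of n is 0 or 1
  have hN01 : ∀ n : V → ℕ, Q n ≠ 0 → (∑ r, n r) ≤ 1 := by
    intro n hQn
    have h1 : Nf n ^ 2 - Nf n = 0 := by
      rcases mul_eq_zero.1 (hkey1 n) with h | h
      · exact absurd h hQn
      · exact h
    rw [hNfcast n] at h1
    set k := ∑ r, n r
    have : (k : ℝ) ^ 2 = (k : ℝ) := by linarith
    have hk : k ^ 2 = k := by exact_mod_cast this
    nlinarith [hk]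
  -- pointwise Q n * (1 - Nf n) = 0
  have hkey2 : ∀ n, Q n * (1 - Nf n) = 0 := by
    have hsum : Summable (fun n => Q n * (1 - Nf n)) := by
      refine (hQsum.summable.sub hEN.summable).congr fun n => by ring
    have htsum : ∑' n, Q n * (1 - Nf n) = 0 := by
      have : ∑' n, Q n * (1 - Nf n) = (∑' n, Q n) - ∑' n, Q n * Nf n := by
        rw [← Summable.tsum_sub hQsum.summable hEN.summable]
        exact tsum_congr fun n => by ring
      rw [this, hQsum.tsum_eq, hEN.tsum_eq]
      ring
    have hnn : ∀ n, 0 ≤ Q n * (1 - Nf n) := by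
      intro n
      rcases eq_or_ne (Q n) 0 with h | h
      · simp [h]
      · have hle := hN01 n h
        have : Nf n ≤ 1 := by
          rw [hNfcast n]
          exact_mod_cast hle
        exact mul_nonneg (hQnn n) (by linarith)
    intro n
    have hle := Summable.le_tsum hsum n (fun m _ => hnn m)
    rw [htsum] at hle
    linarith [hnn n]
  -- Q n ≠ 0 → ∑ n r = 1
  have hkey : ∀ n : V → ℕ, Q n ≠ 0 → ∑ r, n r = 1 := by
    intro n hQn
    have h1 : (1 : ℝ) - Nf n = 0 := by
      rcases mul_eq_zero.1 (hkey2 n) with h | h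
      · exact absurd h hQn
      · exact h
    rw [hNfcast n] at h1
    exact_mod_cast (by linarith : ((∑ r, n r : ℕ) : ℝ) = 1)
  -- p positivity → Q positivity
  have hQpos : ∀ k n, 0 < p k n → 0 < Q n := by
    intro k n h
    have h1 : v k * p k n ≤ Q n :=
      Finset.single_le_sum (fun s _ => mul_nonneg (hvpos s).le (hp0 s n)) (Finset.mem_univ k)
    exact lt_of_lt_of_le (mul_pos (hvpos k) h) h1
  have hsupp : ∀ k n, 0 < p k n → ∃ s, n = Pi.single s 1 := by
    intro k n h
    exact stmt_10_aux_single n (hkey n (ne_of_gt (hQpos k n h)))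
  have hvanish : ∀ k n, (∀ s : V, n ≠ Pi.single s 1) → p k n = 0 := by
    intro k n h
    rcases (hp0 k n).eq_or_lt with h0 | h0
    · exact h0.symm
    · obtain ⟨s, hs⟩ := hsupp k n h0
      exact absurd hs (h s)
  -- row sums of p over basis vectors equal 1
  have hrowsum : ∀ k, ∑ s, p k (Pi.single s 1) = 1 := by
    intro k
    have hinj : Function.Injective (fun s : V => (Pi.single s 1 : V → ℕ)) := by
      intro a b hab
      by_contra hne
      have := congrFun hab a
      simp [Pi.single_eq_same, Pi.single_eq_of_ne hne] at this
    have h1 : HasSum (p k)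
        (∑ n ∈ Finset.image (fun s : V => (Pi.single s 1 : V → ℕ)) Finset.univ, p k n) := by
      refine hasSum_sum_of_ne_finset_zero ?_
      intro n hn
      refine hvanish k n fun s hs => hn ?_
      rw [hs]
      exact Finset.mem_image_of_mem _ (Finset.mem_univ s)
    have h2 := h1.unique (hsump k)
    rwa [Finset.sum_image (fun a _ b _ h => hinj h)] at h2
  -- M entries
  have hMe : ∀ k l, M k l = p k (Pi.single l 1) := by
    intro k l
    have h1 : HasSum (fun n : V → ℕ => p k n * (n l : ℝ))
        (p k (Pi.single l 1) * (((Pi.single l 1 : V → ℕ) l : ℝ))) := by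
      refine hasSum_single (Pi.single l 1) ?_
      intro n hn
      rcases (hp0 k n).eq_or_lt with h0 | h0
      · simp [← h0]
      · obtain ⟨s, rfl⟩ := hsupp k n h0
        have hsl : s ≠ l := fun e => hn (by rw [e])
        simp [Pi.single_eq_of_ne (Ne.symm hsl)]
    have := (hM k l).unique h1
    simpa [Pi.single_eq_same] using this
  have hMrow : ∀ k, ∑ l, M k l = 1 := by
    intro k
    rw [Finset.sum_congr rfl fun l _ => hMe k l]
    exact hrowsum k
  refine ⟨?_, ?_, ?_⟩
  · intro k n h
    exact Or.inr (hsupp k n h)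
  · intro s r
    obtain ⟨m, hm⟩ := hirr
    have hMmu' : ∀ m' : ℕ, (M ^ m').mulVec u = u := by
      intro m'
      induction m' with
      | zero => simp
      | succ m' ih => rw [pow_succ, ← Matrix.mulVec_mulVec, hu, ih]
    have hMmu := hMmu' m
    have hone : M.mulVec (fun _ => (1:ℝ)) = fun _ => 1 := by
      funext k
      simp [Matrix.mulVec, dotProduct, hMrow k]
    have hpow' : ∀ m' : ℕ, (M ^ m').mulVec (fun _ => (1:ℝ)) = fun _ => 1 := by
      intro m'
      induction m' with
      | zero => simp
      | succ m' ih => rw [pow_succ, ← Matrix.mulVec_mulVec, hone, ih]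
    have hpow := hpow' m
    have hMmrow : ∀ k, ∑ l, (M ^ m) k l = 1 := by
      intro k
      have := congrFun hpow k
      simpa [Matrix.mulVec, dotProduct] using this
    obtain ⟨r0, -, hr0⟩ := Finset.exists_max_image Finset.univ u ⟨s, Finset.mem_univ s⟩
    have hall : ∀ l, u l = u r0 := by
      intro l
      by_contra hne
      have hlt : u l < u r0 := lt_of_le_of_ne (hr0 l (Finset.mem_univ l)) hne
      have h1 : ∑ t, (M ^ m) r0 t * u t < ∑ t, (M ^ m) r0 t * u r0 :=
        Finset.sum_lt_sum
          (fun t _ => mul_le_mul_of_nonneg_left (hr0 t (Finset.mem_univ t)) (hm r0 t).le)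
          ⟨l, Finset.mem_univ l, mul_lt_mul_of_pos_left hlt (hm r0 l)⟩
      have h2 : ∑ t, (M ^ m) r0 t * u t = u r0 := by
        have := congrFun hMmu r0
        simpa [Matrix.mulVec, dotProduct] using this
      have h3 : ∑ t, (M ^ m) r0 t * u r0 = u r0 := by
        rw [← Finset.sum_mul, hMmrow r0, one_mul]
      linarith
    rw [hall s, hall r]
  · intro r _
    exact hrowsum r
end

section
/- lim_{λ→1⁻} (1−λ) S_λ = u, where S_λ^t = (I − λM)^{-1} 1^t and u is the right Frobenius eigenvector normalized by v·u = 1. -/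
open Matrix Filter

lemma vecMulVec_mulVec_eq {V : Type*} [Fintype V] (u v x : V → ℝ) :
    vecMulVec u v *ᵥ x = (v ⬝ᵥ x) • u := by
  funext i
  simp only [Matrix.mulVec, Matrix.vecMulVec, dotProduct, Pi.smul_apply, smul_eq_mul,
    Finset.mul_sum, Matrix.of_apply]
  rw [Finset.sum_mul]
  exact Finset.sum_congr rfl fun j _ => by ring

lemma vecMul_smulMat {V : Type*} [Fintype V] (v : V → ℝ) (c : ℝ) (M : Matrix V V ℝ) :
    v ᵥ* (c • M) = c • (v ᵥ* M) := by
  funext i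
  simp only [Matrix.vecMul, dotProduct, Matrix.smul_apply, Pi.smul_apply, smul_eq_mul,
    Finset.mul_sum]
  exact Finset.sum_congr rfl fun j _ => by ring

/-- `lim_{λ→1⁻} (1−λ) S_λ = u`, where `S_λᵗ = (I − λM)⁻¹ 1ᵗ` and `u` is the right
Frobenius eigenvector normalized by `v·u = 1`.  The limit is entrywise in `ℝ^V`. -/
theorem stmt_16 {V : Type*} [Fintype V] [DecidableEq V]
    (M : Matrix V V ℝ) (hM0 : ∀ i j, 0 ≤ M i j)
    (hirr : ∃ m : ℕ, ∀ i j, 0 < (M ^ m) i j)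
    (v u : V → ℝ)
    (hv : Matrix.vecMul v M = v) (hu : M.mulVec u = u)
    (hvpos : ∀ s, 0 < v s) (hupos : ∀ s, 0 < u s)
    (hv1 : ∑ s, v s = 1) (hvu : v ⬝ᵥ u = 1)
    (hsimple : ∀ x : V → ℝ, M.mulVec x = x → ∃ c : ℝ, x = c • u)
    (hinv : ∀ lam ∈ Set.Ioo (0 : ℝ) 1, IsUnit (1 - lam • M)) :
    Tendsto (fun lam : ℝ => (1 - lam) • ((1 - lam • M)⁻¹ *ᵥ (fun _ => (1 : ℝ))))
      (nhdsWithin 1 (Set.Ioo (0 : ℝ) 1)) (nhds u) := by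
  classical
  set w : V → ℝ := (fun _ => (1 : ℝ)) - u with hw
  have hvw : v ⬝ᵥ w = 0 := by
    have : v ⬝ᵥ (fun _ => (1 : ℝ)) = 1 := by
      simpa [dotProduct] using hv1
    simp [hw, dotProduct_sub, this, hvu]
  -- the rank-one corrected family
  set F : ℝ → Matrix V V ℝ := fun lam => 1 - lam • M + vecMulVec u v with hF
  -- F lam *ᵥ x expansion
  have hFmul : ∀ lam (x : V → ℝ),
      F lam *ᵥ x = x - lam • (M *ᵥ x) + (v ⬝ᵥ x) • u := by
    intro lam x
    simp [hF, Matrix.add_mulVec, Matrix.sub_mulVec, Matrix.smul_mulVec,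
      vecMulVec_mulVec_eq]
  -- F is invertible on (0,1]
  have hFunit : ∀ lam : ℝ, 0 < lam → lam ≤ 1 → IsUnit (F lam) := by
    intro lam hl0 hl1
    rw [Matrix.isUnit_iff_isUnit_det, isUnit_iff_ne_zero]
    intro hdet
    obtain ⟨x, hx0, hx⟩ := (Matrix.exists_mulVec_eq_zero_iff).2 hdet
    rw [hFmul] at hx
    have hvx : v ⬝ᵥ x = 0 := by
      have h0 : v ⬝ᵥ (x - lam • (M *ᵥ x) + (v ⬝ᵥ x) • u) = 0 := by rw [hx]; simp
      have hvMx : v ⬝ᵥ (M *ᵥ x) = v ⬝ᵥ x := by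
        rw [Matrix.dotProduct_mulVec, hv]
      rw [dotProduct_add, dotProduct_sub, dotProduct_smul, hvMx,
        dotProduct_smul, hvu] at h0
      have : (2 - lam) * (v ⬝ᵥ x) = 0 := by
        simp only [smul_eq_mul, mul_one] at h0
        linear_combination h0
      have h2 : (2 : ℝ) - lam ≠ 0 := by linarith
      exact (mul_eq_zero.1 this).resolve_left h2
    rw [hvx, zero_smul, add_zero, sub_eq_zero] at hx
    -- x = lam • (M *ᵥ x)
    rcases lt_or_eq_of_le hl1 with hlt | heq
    · -- lam < 1 : use hinv
      have hdet' := (Matrix.isUnit_iff_isUnit_det _).1 (hinv lam ⟨hl0, hlt⟩)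
      have hAx : (1 - lam • M) *ᵥ x = 0 := by
        simp [Matrix.sub_mulVec, Matrix.smul_mulVec, ← hx]
      have hx' : x = 0 := by
        have h := congrArg (fun z => (1 - lam • M)⁻¹ *ᵥ z) hAx
        simpa [Matrix.mulVec_mulVec, Matrix.nonsing_inv_mul _ hdet',
          Matrix.one_mulVec, Matrix.mulVec_zero] using h
      exact hx0 hx'
    · -- lam = 1 : use hsimple
      subst heq
      have hMx : M *ᵥ x = x := by simpa using hx.symm
      obtain ⟨c, hc⟩ := hsimple x hMx
      have : v ⬝ᵥ x = c := by rw [hc]; simp [dotProduct_smul, hvu]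
      rw [this] at hvx
      exact hx0 (by rw [hc, hvx, zero_smul])
  -- eventual identity on Ioo 0 1
  have hkey : ∀ lam ∈ Set.Ioo (0:ℝ) 1,
      (1 - lam) • ((1 - lam • M)⁻¹ *ᵥ (fun _ => (1 : ℝ)))
        = u + (1 - lam) • ((F lam)⁻¹ *ᵥ w) := by
    intro lam hlam
    obtain ⟨hl0, hl1⟩ := hlam
    have hone : (1:ℝ) - lam ≠ 0 := by linarith
    set A : Matrix V V ℝ := 1 - lam • M with hA
    have hAu : IsUnit A := hinv lam ⟨hl0, hl1⟩
    have hAdet : IsUnit A.det := (Matrix.isUnit_iff_isUnit_det _).1 hAu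
    have hAinvA : A⁻¹ * A = 1 := Matrix.nonsing_inv_mul _ hAdet
    have hcancel : ∀ x : V → ℝ, A⁻¹ *ᵥ (A *ᵥ x) = x := by
      intro x; rw [Matrix.mulVec_mulVec, hAinvA, Matrix.one_mulVec]
    -- A⁻¹ u
    have hAu' : A *ᵥ u = (1 - lam) • u := by
      simp [hA, Matrix.sub_mulVec, Matrix.smul_mulVec, hu, sub_smul]
    have hAinvu : A⁻¹ *ᵥ u = (1 - lam)⁻¹ • u := by
      have h1 : A⁻¹ *ᵥ (A *ᵥ u) = u := hcancel u
      rw [hAu', Matrix.mulVec_smul] at h1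
      calc A⁻¹ *ᵥ u = (1 - lam)⁻¹ • ((1 - lam) • (A⁻¹ *ᵥ u)) := by
            rw [smul_smul, inv_mul_cancel₀ hone, one_smul]
        _ = (1 - lam)⁻¹ • u := by rw [h1]
    set y : V → ℝ := A⁻¹ *ᵥ w with hy
    have hAy : A *ᵥ y = w := by
      have : A *ᵥ (A⁻¹ *ᵥ w) = w := by
        rw [Matrix.mulVec_mulVec, Matrix.mul_nonsing_inv _ hAdet, Matrix.one_mulVec]
      simpa [hy] using this
    have hvy : v ⬝ᵥ y = 0 := by
      have h1 : v ⬝ᵥ (A *ᵥ y) = (1 - lam) * (v ⬝ᵥ y) := by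
        rw [Matrix.dotProduct_mulVec]
        have : vecMul v A = (1 - lam) • v := by
          simp [hA, Matrix.vecMul_sub, vecMul_smulMat, hv, sub_smul, Matrix.vecMul_one]
        rw [this]
        simp [smul_dotProduct]
      rw [hAy, hvw] at h1
      rcases mul_eq_zero.1 h1.symm with h | h
      · exact absurd h hone
      · exact h
    have hFy : F lam *ᵥ y = w := by
      rw [hFmul, hvy, zero_smul, add_zero]
      have : y - lam • (M *ᵥ y) = A *ᵥ y := by
        simp [hA, Matrix.sub_mulVec, Matrix.smul_mulVec]
      rw [this, hAy]
    have hFu : IsUnit (F lam) := hFunit lam hl0 hl1.le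
    have hFdet : IsUnit (F lam).det := (Matrix.isUnit_iff_isUnit_det _).1 hFu
    have hyF : (F lam)⁻¹ *ᵥ w = y := by
      rw [← hFy, Matrix.mulVec_mulVec, Matrix.nonsing_inv_mul _ hFdet, Matrix.one_mulVec]
    -- assemble
    have hone' : (fun _ => (1:ℝ)) = u + w := by funext i; simp [hw]
    rw [hone', Matrix.mulVec_add, hAinvu, hyF, smul_add, smul_smul,
      mul_inv_cancel₀ hone, one_smul]
  -- continuity of lam ↦ (F lam)⁻¹ *ᵥ w at 1
  have hFcont : Continuous F := by
    apply Continuous.add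
    · exact continuous_const.sub (continuous_id.smul continuous_const)
    · exact continuous_const
  have hdet1 : (F 1).det ≠ 0 := by
    have := (Matrix.isUnit_iff_isUnit_det _).1 (hFunit 1 one_pos le_rfl)
    exact isUnit_iff_ne_zero.1 this
  have hcontinv : ContinuousAt (fun lam => (F lam)⁻¹ *ᵥ w) 1 := by
    have h1 : ContinuousAt (fun lam => (F lam).det) 1 :=
      (hFcont.matrix_det).continuousAt
    have h2 : ContinuousAt (fun lam => ((F lam).det)⁻¹) 1 := h1.inv₀ hdet1
    have h3 : ContinuousAt (fun lam => (F lam).adjugate) 1 :=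
      (hFcont.matrix_adjugate).continuousAt
    have h4 : ContinuousAt (fun lam => (F lam).adjugate *ᵥ w) 1 :=
      (Continuous.matrix_mulVec hFcont.matrix_adjugate continuous_const).continuousAt
    have h5 : ContinuousAt (fun lam => ((F lam).det)⁻¹ • ((F lam).adjugate *ᵥ w)) 1 :=
      h2.smul h4
    have heq : (fun lam => (F lam)⁻¹ *ᵥ w)
        = fun lam => ((F lam).det)⁻¹ • ((F lam).adjugate *ᵥ w) := by
      funext lam
      rw [Matrix.inv_def, Ring.inverse_eq_inv', Matrix.smul_mulVec]
    rw [heq]; exact h5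
  -- conclude
  have hlim0 : Tendsto (fun lam : ℝ => (1 - lam) • ((F lam)⁻¹ *ᵥ w))
      (nhdsWithin 1 (Set.Ioo (0:ℝ) 1)) (nhds 0) := by
    have ht1 : Tendsto (fun lam : ℝ => 1 - lam) (nhdsWithin 1 (Set.Ioo (0:ℝ) 1)) (nhds 0) := by
      have : Tendsto (fun lam : ℝ => 1 - lam) (nhds 1) (nhds 0) := by
        have hc : Continuous (fun lam : ℝ => 1 - lam) := continuous_const.sub continuous_id
        simpa using hc.tendsto 1
      exact this.mono_left nhdsWithin_le_nhds
    have ht2 := hcontinv.tendsto.mono_left (nhdsWithin_le_nhds (s := Set.Ioo (0:ℝ) 1))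
    have := ht1.smul ht2
    simpa using this
  have hfinal : Tendsto (fun lam : ℝ => u + (1 - lam) • ((F lam)⁻¹ *ᵥ w))
      (nhdsWithin 1 (Set.Ioo (0:ℝ) 1)) (nhds u) := by
    have := tendsto_const_nhds (x := u) (f := nhdsWithin 1 (Set.Ioo (0:ℝ) 1)) |>.add hlim0
    simpa using this
  refine hfinal.congr' ?_
  filter_upwards [eventually_mem_nhdsWithin] with lam hlam
  exact (hkey lam hlam).symm
end

section
/- Let z be a root with nonpositive real part of the quadratic H(u) z^2 + 2Aiz + (B + 2Ki) = 0, depending continuously on the real parameter K, where A, B are real and H(u) > 0. If such a continuous choice of root with negative real part exists for all K ≠ 0, then A^2 ≤ −H(u)B. -/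
/-- Let `z(K)` be a root of `H(u) z² + 2Aiz + (B + 2Ki) = 0` with nonpositive real part,
depending continuously on the real parameter `K`, where `A, B ∈ ℝ` and `H(u) > 0`.  If the
root has negative real part for all `K ≠ 0`, then `A² ≤ −H(u)B`. -/
theorem stmt_18 (Hu A B : ℝ) (hHu : 0 < Hu)
    (z : ℝ → ℂ) (hz : Continuous z)
    (hroot : ∀ K : ℝ,
      (Hu : ℂ) * z K ^ 2 + 2 * (A : ℂ) * Complex.I * z K + ((B : ℂ) + 2 * (K : ℂ) * Complex.I) = 0)
    (hre : ∀ K : ℝ, (z K).re ≤ 0)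
    (hre' : ∀ K : ℝ, K ≠ 0 → (z K).re < 0) :
    A ^ 2 ≤ -(Hu * B) := by
  have him : ∀ K : ℝ, (z K).re * (Hu * (z K).im + A) = -K := by
    intro K
    have h2 := congrArg Complex.im (hroot K)
    simp [Complex.add_im, Complex.mul_im, Complex.mul_re, pow_two] at h2
    nlinarith [h2]
  have hpos : ∀ K : ℝ, 0 < K → 0 < Hu * (z K).im + A := by
    intro K hK
    have hx := hre' K (ne_of_gt hK)
    have := him K
    nlinarith
  have hneg : ∀ K : ℝ, K < 0 → Hu * (z K).im + A < 0 := by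
    intro K hK
    have hx := hre' K (ne_of_lt hK)
    have := him K
    nlinarith
  have hgc : Continuous fun K => Hu * (z K).im + A :=
    ((continuous_const.mul (Complex.continuous_im.comp hz)).add continuous_const)
  have hle1 : 0 ≤ Hu * (z 0).im + A := by
    have ht : Filter.Tendsto (fun K => Hu * (z K).im + A) (nhdsWithin 0 (Set.Ioi 0))
        (nhds (Hu * (z 0).im + A)) := (hgc.tendsto 0).mono_left nhdsWithin_le_nhds
    exact ge_of_tendsto ht (Filter.eventually_of_mem self_mem_nhdsWithin
      (fun K hK => le_of_lt (hpos K hK)))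
  have hle2 : Hu * (z 0).im + A ≤ 0 := by
    have ht : Filter.Tendsto (fun K => Hu * (z K).im + A) (nhdsWithin 0 (Set.Iio 0))
        (nhds (Hu * (z 0).im + A)) := (hgc.tendsto 0).mono_left nhdsWithin_le_nhds
    exact le_of_tendsto ht (Filter.eventually_of_mem self_mem_nhdsWithin
      (fun K hK => le_of_lt (hneg K hK)))
  have hy0 : Hu * (z 0).im + A = 0 := le_antisymm hle2 hle1
  have hre0 := congrArg Complex.re (hroot 0)
  simp [Complex.add_re, Complex.mul_re, Complex.mul_im, pow_two] at hre0
  nlinarith [sq_nonneg ((z 0).re), hre0, hy0, sq_nonneg (Hu * (z 0).re)]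
end
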